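/- If e is idempotent mod m, a, b ∈ R_m^e, and gcd(|a|_m, |b|_m) = 1, then |ab|_m = |a|_m · |b|_m. -/

import Mathlib

/-- `e` is an idempotent residue modulo `m`: `e^2 ≡ e (mod m)`. -/
def Idem (m : ℕ) (e : ZMod m) : Prop := e ^ 2 = e

/-- The order `|a|_m`: the least `n ≥ 1` such that `a^n` is idempotent mod `m`. -/
noncomputable def ord (m : ℕ) (a : ZMod m) : ℕ := sInf {n | 1 ≤ n ∧ Idem m (a ^ n)}

/-- `a` is regular modulo `m`: `a^(|a|_m + 1) ≡ a (mod m)`. -/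
noncomputable def Reg (m : ℕ) (a : ZMod m) : Prop := a ^ (ord m a + 1) = a

/-- `R_m^e`: the regular residues mod `m` whose idempotent power is `e`. -/
noncomputable def Rme (m : ℕ) (e : ZMod m) : Set (ZMod m) :=
  {a | Reg m a ∧ a ^ (ord m a) = e}

/-- The orbit of `a` modulo `m`: `{a^j mod m : 1 ≤ j ≤ |a|_m}`. -/
noncomputable def orb (m : ℕ) (a : ZMod m) : Finset (ZMod m) :=
  (Finset.Icc 1 (ord m a)).image (a ^ ·)

/-!
Every `a ∈ R_m^e` satisfies `a * e = a` and `a ^ |a|_m = e`, so its powers are periodic with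
period `|a|_m` from the first power on; hence `a ^ n` is idempotent only when `|a|_m ∣ n`.
Writing `γ = |ab|_m`, the power `a ^ (γ |b|_m)` equals `(ab) ^ (γ |b|_m) = ((ab) ^ γ) ^ |b|_m`,
which is idempotent, so `|a|_m ∣ γ |b|_m` and by coprimality `|a|_m ∣ γ`; symmetrically
`|b|_m ∣ γ`. Conversely `(ab) ^ (|a|_m |b|_m) = e`, so `γ ≤ |a|_m |b|_m`.
-/

theorem exists_pos_isIdempotentElem_pow {M : Type*} [Monoid M] [Finite M] (a : M) :
    ∃ n, 0 < n ∧ IsIdempotentElem (a ^ n) := by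
  obtain ⟨i, j, hij, h⟩ := Finite.exists_ne_map_eq_of_infinite (a ^ · : ℕ → M)
  wlog hlt : i < j generalizing i j
  · exact this j i hij.symm h.symm (by omega)
  obtain ⟨d, hd, rfl⟩ : ∃ d, 0 < d ∧ j = d + i := ⟨j - i, by omega, by omega⟩
  have hper : ∀ k, a ^ (d * k) * a ^ i = a ^ i := by
    intro k
    induction k with
    | zero => simp
    | succ k ih =>
      rw [mul_add, mul_one, pow_add, mul_assoc, ← pow_add, ← h, ih]
  have hi : i ≤ d * (i + 1) := by nlinarith
  -- a multiple of the period `d` past the preperiod `i`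
  refine ⟨d * (i + 1), by positivity, ?_⟩
  calc a ^ (d * (i + 1)) * a ^ (d * (i + 1))
      = a ^ (d * (i + 1) - i) * (a ^ (d * (i + 1)) * a ^ i) := by
        rw [← mul_assoc, pow_mul_comm a (d * (i + 1) - i), mul_assoc,
          ← pow_add a (d * (i + 1) - i), Nat.sub_add_cancel hi]
    _ = a ^ (d * (i + 1)) := by rw [hper, ← pow_add, Nat.sub_add_cancel hi]

theorem idem_iff_isIdempotentElem {m : ℕ} {x : ZMod m} : Idem m x ↔ IsIdempotentElem x := by
  rw [Idem, sq, IsIdempotentElem]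

section ord

variable {m : ℕ} {a : ZMod m} {n : ℕ}

theorem ord_le (hn : 0 < n) (h : Idem m (a ^ n)) : ord m a ≤ n :=
  Nat.sInf_le ⟨hn, h⟩

theorem ord_pos_of_idem (hn : 0 < n) (h : Idem m (a ^ n)) : 0 < ord m a :=
  (Nat.sInf_mem ⟨n, hn, h⟩ : ord m a ∈ {n | 1 ≤ n ∧ Idem m (a ^ n)}).1

theorem exists_idem_pow [NeZero m] (a : ZMod m) : ∃ n, 0 < n ∧ Idem m (a ^ n) := by
  simpa only [idem_iff_isIdempotentElem] using exists_pos_isIdempotentElem_pow a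

theorem ord_pos [NeZero m] (a : ZMod m) : 0 < ord m a :=
  have ⟨_, hn, h⟩ := exists_idem_pow a
  ord_pos_of_idem hn h

theorem idem_pow_ord [NeZero m] (a : ZMod m) : Idem m (a ^ ord m a) :=
  (Nat.sInf_mem (exists_idem_pow a) : ord m a ∈ {n | 1 ≤ n ∧ Idem m (a ^ n)}).2

end ord

section Rme

variable {m : ℕ} {e a : ZMod m}

theorem mul_eq_self_of_mem_Rme (ha : a ∈ Rme m e) : a * e = a := by
  have hreg : a ^ (ord m a + 1) = a := ha.1
  rwa [pow_succ', ha.2] at hreg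

theorem pow_mul_eq_self_of_mem_Rme (ha : a ∈ Rme m e) {r : ℕ} (hr : r ≠ 0) :
    a ^ r * e = a ^ r := by
  obtain ⟨s, rfl⟩ := Nat.exists_eq_add_one_of_ne_zero hr
  rw [pow_succ, mul_assoc, mul_eq_self_of_mem_Rme ha]

theorem pow_add_ord_mul_of_mem_Rme (ha : a ∈ Rme m e) {r : ℕ} (hr : r ≠ 0) (k : ℕ) :
    a ^ (r + ord m a * k) = a ^ r := by
  induction k with
  | zero => simp
  | succ k ih =>
    rw [mul_add_one, ← add_assoc, pow_add, ih, ha.2, pow_mul_eq_self_of_mem_Rme ha hr]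

theorem pow_ord_mul_of_mem_Rme (ha : a ∈ Rme m e) (he : Idem m e) {k : ℕ} (hk : k ≠ 0) :
    a ^ (ord m a * k) = e := by
  rw [pow_mul, ha.2, (idem_iff_isIdempotentElem.1 he).pow_eq hk]

theorem ord_dvd_of_idem_pow (ha : a ∈ Rme m e) {n : ℕ} (hn : 0 < n) (h : Idem m (a ^ n)) :
    ord m a ∣ n := by
  have hpos := ord_pos_of_idem hn h
  by_contra hndvd
  have hr : n % ord m a ≠ 0 := fun h0 => hndvd (Nat.dvd_of_mod_eq_zero h0)
  have hpow : a ^ n = a ^ (n % ord m a) := by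
    conv_lhs => rw [← Nat.mod_add_div n (ord m a)]
    exact pow_add_ord_mul_of_mem_Rme ha hr _
  have := ord_le (Nat.pos_of_ne_zero hr) (hpow ▸ h)
  exact (Nat.mod_lt n hpos).not_ge this

theorem ord_dvd_ord_mul_mul_ord [NeZero m] {b : ZMod m} (he : Idem m e) (ha : a ∈ Rme m e)
    (hb : b ∈ Rme m e) : ord m a ∣ ord m (a * b) * ord m b := by
  set γ := ord m (a * b)
  have hγ : γ ≠ 0 := (ord_pos _).ne'
  have hβ : ord m b ≠ 0 := (ord_pos b).ne'
  have hab : IsIdempotentElem ((a * b) ^ γ) := idem_iff_isIdempotentElem.1 (idem_pow_ord _)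
  have hpow : a ^ (γ * ord m b) = (a * b) ^ γ :=
    calc a ^ (γ * ord m b) = a ^ (γ * ord m b) * b ^ (ord m b * γ) := by
          rw [pow_ord_mul_of_mem_Rme hb he hγ, pow_mul_eq_self_of_mem_Rme ha (mul_ne_zero hγ hβ)]
      _ = ((a * b) ^ γ) ^ ord m b := by rw [mul_comm (ord m b), ← mul_pow, pow_mul]
      _ = (a * b) ^ γ := hab.pow_eq hβ
  exact ord_dvd_of_idem_pow ha (by positivity) (hpow ▸ idem_pow_ord _)

end Rme

/-- If `a, b ∈ R_m^e` have coprime orders, then `|ab|_m = |a|_m · |b|_m`. -/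
theorem ord_mul_of_coprime (m : ℕ) (hm : 1 ≤ m) (e : ZMod m) (he : Idem m e)
    (a b : ZMod m) (ha : a ∈ Rme m e) (hb : b ∈ Rme m e)
    (hcop : Nat.gcd (ord m a) (ord m b) = 1) :
    ord m (a * b) = ord m a * ord m b := by
  have : NeZero m := ⟨by omega⟩
  have hα := (ord_pos a).ne'
  have hβ := (ord_pos b).ne'
  have hpow : (a * b) ^ (ord m a * ord m b) = e := by
    rw [mul_pow, pow_ord_mul_of_mem_Rme ha he hβ, mul_comm (ord m a),
      pow_ord_mul_of_mem_Rme hb he hα, ← sq, he]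
  have hle : ord m (a * b) ≤ ord m a * ord m b :=
    ord_le (by positivity) (hpow ▸ he)
  have hadvd : ord m a ∣ ord m (a * b) :=
    Nat.Coprime.dvd_of_dvd_mul_right hcop (ord_dvd_ord_mul_mul_ord he ha hb)
  have hbdvd : ord m b ∣ ord m (a * b) :=
    Nat.Coprime.dvd_of_dvd_mul_right (Nat.Coprime.symm hcop)
      (mul_comm a b ▸ ord_dvd_ord_mul_mul_ord he hb ha)
  exact le_antisymm hle
    (Nat.le_of_dvd (ord_pos _) (Nat.Coprime.mul_dvd_of_dvd_of_dvd hcop hadvd hbdvd))
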